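/- Suppose there exists a cyclic m-distinguishable sequence over [k−1] whose window multisets cover all C(k+m−2, m) size-m multisets of [k−1] (an (m, k−1)-Mcycle). Then appending m consecutive copies of the new symbol k to the end of any t-cut of this sequence yields an m-distinguishable (non-cyclic) sequence over [k] of length C(k+m−2, m) + 2m − 1. Hence M_m(k) ≥ C(k+m−2, m) + 2m − 1. -/

import Mathlib

/-
The windows of the cut that end inside the old part are cyclic windows of the Mcycle, hence
pairwise distinct, and none of them contains the new symbol. The window starting at `u` that
reaches into the appended block of length `m` contains the new symbol exactly `u + m - L` times
(`L` the length of the cut), so these windows are told apart by that count.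
-/

/-- The multiset of `m` consecutive elements of `s` starting at `t`. -/
def window {α : Type*} (s : ℕ → α) (m t : ℕ) : Multiset α :=
  (Multiset.range m).map (fun i => s (t + i))

/-- The multiset of `m` cyclically consecutive elements (indices mod `M`). -/
def cwindow {α : Type*} (s : ℕ → α) (M m t : ℕ) : Multiset α :=
  (Multiset.range m).map (fun i => s ((t + i) % M))

/-- `s` is an `m`-distinguishable (non-cyclic) sequence of length `M`. -/
def IsDist {α : Type*} (M m : ℕ) (s : ℕ → α) : Prop :=
  ∀ t₁ t₂, t₁ + m ≤ M → t₂ + m ≤ M → window s m t₁ = window s m t₂ → t₁ = t₂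

/-- `s` is a cyclic `m`-distinguishable sequence of length `M`. -/
def IsCyclicDist {α : Type*} (M m : ℕ) (s : ℕ → α) : Prop :=
  ∀ t₁ t₂, t₁ < M → t₂ < M → cwindow s M m t₁ = cwindow s M m t₂ → t₁ = t₂

/-- On `[0, M + m - 1)`, `cyclicCut s M (t + 1)` is the paper's `t`-cut of `s`. -/
def cyclicCut {α : Type*} (s : ℕ → α) (M t : ℕ) : ℕ → α :=
  fun i => s ((t + i) % M)

lemma window_cyclicCut {α : Type*} (s : ℕ → α) (M m t u : ℕ) :
    window (cyclicCut s M t) m u = cwindow s M m ((t + u) % M) := by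
  simp only [window, cyclicCut, cwindow, Nat.mod_add_mod, Nat.add_assoc]

lemma cwindow_comp {α β : Type*} (f : α → β) (s : ℕ → α) (M m t : ℕ) :
    cwindow (f ∘ s) M m t = (cwindow s M m t).map f := by
  simp only [cwindow, Multiset.map_map, Function.comp_def]

lemma IsCyclicDist.comp {α β : Type*} {M m : ℕ} {s : ℕ → α} (hs : IsCyclicDist M m s)
    {f : α → β} (hf : Function.Injective f) : IsCyclicDist M m (f ∘ s) := by
  intro t₁ t₂ h₁ h₂ hw
  rw [cwindow_comp, cwindow_comp] at hw
  exact hs t₁ t₂ h₁ h₂ (Multiset.map_injective hf hw)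

theorem IsCyclicDist.isDist_cyclicCut {α : Type*} {M m : ℕ} {s : ℕ → α}
    (hs : IsCyclicDist M m s) (hm : 0 < m) (t : ℕ) : IsDist (M + m - 1) m (cyclicCut s M t) := by
  intro u₁ u₂ h₁ h₂ hw
  rw [window_cyclicCut, window_cyclicCut] at hw
  have hM : 0 < M := by omega
  have hmod := hs _ _ (Nat.mod_lt _ hM) (Nat.mod_lt _ hM) hw
  have := Nat.ModEq.add_left_cancel' t hmod
  rwa [Nat.ModEq, Nat.mod_eq_of_lt (by omega), Nat.mod_eq_of_lt (by omega)] at this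

lemma count_window_append {α : Type*} [DecidableEq α] {L m u : ℕ} {c : ℕ → α} {b : α}
    (hb : ∀ i < L, c i ≠ b) (hu : u ≤ L) :
    (window (fun i => if i < L then c i else b) m u).count b = u + m - L := by
  have hfilter : (Finset.range m).filter (fun i => b = if u + i < L then c (u + i) else b) =
      Finset.Ico (L - u) m := by
    ext i
    simp only [Finset.mem_filter, Finset.mem_range, Finset.mem_Ico]
    by_cases hi : u + i < L
    · simp only [hi, if_true, (hb _ hi).symm, and_false, false_iff]
      omega
    · simp only [hi, if_false, and_true]
      omega
  rw [window, Multiset.count_map, ← Finset.range_val, ← Finset.filter_val, Finset.card_val,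
    hfilter, Nat.card_Ico]
  omega

theorem IsDist.append_fresh {α : Type*} {L m : ℕ} {c : ℕ → α} (hc : IsDist L m c) {b : α}
    (hb : ∀ i < L, c i ≠ b) : IsDist (L + m) m (fun i => if i < L then c i else b) := by
  classical
  intro u₁ u₂ h₁ h₂ hw
  have hcount := congrArg (Multiset.count b) hw
  rw [count_window_append hb (by omega), count_window_append hb (by omega)] at hcount
  by_cases hfresh : L < u₁ + m
  · omega
  · refine hc u₁ u₂ (by omega) (by omega) ?_
    have hwindow : ∀ u, u + m ≤ L →
        window (fun i => if i < L then c i else b) m u = window c m u :=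
      fun u hu => Multiset.map_congr rfl fun i hi =>
        if_pos (by have := Multiset.mem_range.1 hi; omega)
    rwa [hwindow u₁ (by omega), hwindow u₂ (by omega)] at hw

theorem stmt18_general (k m : ℕ) (hm : 0 < m) (s : ℕ → Fin k)
    (hS : IsCyclicDist ((k + m - 1).choose m) m s) :
    (∀ t : ℕ, IsDist ((k + m - 1).choose m + 2 * m - 1) m
      (fun i => if i < (k + m - 1).choose m + m - 1 then
          Fin.castSucc (s ((t + 1 + i) % (k + m - 1).choose m))
        else Fin.last k)) ∧
    ∃ c : ℕ → Fin (k + 1), IsDist ((k + m - 1).choose m + 2 * m - 1) m c := by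
  have hcut (t : ℕ) :=
    ((hS.comp (Fin.castSucc_injective k)).isDist_cyclicCut hm (t + 1)).append_fresh
      (b := Fin.last k) fun i _ => (Fin.castSucc_lt_last _).ne
  rw [show (k + m - 1).choose m + 2 * m - 1 = (k + m - 1).choose m + m - 1 + m by omega]
  exact ⟨hcut, _, hcut 0⟩

/-- Suppose `s` is an `(m, k)`-Mcycle: a cyclic `m`-distinguishable sequence
over `k` old colors (inside the alphabet of `k + 1` colors) of length
`M₀ = C(k+m-1, m)` whose windows cover all size-`m` multisets of the `k` old
colors. Then, for every `t`, appending `m` consecutive copies of the new color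
`k+1` to the `t`-cut of `s` yields an `m`-distinguishable sequence over `k + 1`
colors of length `M₀ + 2m - 1`; hence `M_m(k+1) ≥ C(k+m-1, m) + 2m - 1`. -/
theorem stmt18 (k m : ℕ) (hm : 0 < m) (hk : 0 < k) (s : ℕ → Fin k)
    (hS : IsCyclicDist ((k + m - 1).choose m) m s)
    (hMcycle : ∀ A : Multiset (Fin k), Multiset.card A = m →
      ∃ t < (k + m - 1).choose m, cwindow s ((k + m - 1).choose m) m t = A) :
    (∀ t : ℕ, IsDist ((k + m - 1).choose m + 2 * m - 1) m
      (fun i => if i < (k + m - 1).choose m + m - 1 then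
          Fin.castSucc (s ((t + 1 + i) % (k + m - 1).choose m))
        else Fin.last k)) ∧
    ∃ c : ℕ → Fin (k + 1), IsDist ((k + m - 1).choose m + 2 * m - 1) m c :=
  stmt18_general k m hm s hS
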